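/- Every tree T on n ≥ 3 vertices satisfies c(T) ≤ (n−1)/3, where c(T) is the minimum cardinality of a set S ⊆ V(T) with f_T(S) = P(T), and f_T(S) = |E_T(S)| − 2|S| + 1. -/

import Mathlib

open Matrix

/-- `s` induces a path in `G` (possibly a one-vertex or empty path). -/
def IsPathSet {V : Type*} [Fintype V] [DecidableEq V] (G : SimpleGraph V) (s : Finset V) : Prop :=
  ∃ m : ℕ, Nonempty ((SimpleGraph.induce (↑s : Set V) G) ≃g SimpleGraph.pathGraph m)

/-- The path cover number: the minimum number of vertex-disjoint induced paths
covering all vertices of `G`. -/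
noncomputable def pathCoverNumber {V : Type*} [Fintype V] [DecidableEq V]
    (G : SimpleGraph V) : ℕ :=
  sInf {p | ∃ P : Finset (Finset V), P.card = p ∧ (∀ s ∈ P, IsPathSet G s) ∧
    ∀ v : V, ∃! s, s ∈ P ∧ v ∈ s}

/-- The set of edges of `G` incident to at least one vertex of `S`. -/
def ETset {n : ℕ} (G : SimpleGraph (Fin n)) (S : Finset (Fin n)) : Set (Sym2 (Fin n)) :=
  {e ∈ G.edgeSet | ∃ v ∈ S, v ∈ e}

/-- f_G(S) = |E_G(S)| − 2|S| + 1. -/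
noncomputable def fT {n : ℕ} (G : SimpleGraph (Fin n)) (S : Finset (Fin n)) : ℤ :=
  ((ETset G S).ncard : ℤ) - 2 * S.card + 1

/-- c(T): the minimum size of an optimal set, i.e. a set S with f_T(S) = P(T). -/
noncomputable def cT {n : ℕ} (T : SimpleGraph (Fin n)) : ℕ :=
  sInf {k | ∃ S : Finset (Fin n), S.card = k ∧ fT T S = (pathCoverNumber T : ℤ)}

/-!
Fix a minimum path cover `𝒫` of `T`. An edge at a vertex `v ∈ S` either lies inside the path
of `𝒫` through `v`, and there are at most two such edges at `v`, or it joins two paths of `𝒫`,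
and since each path on `k` vertices spans at least `k - 1` edges there are at most
`(n - 1) - (n - |𝒫|) = |𝒫| - 1` of those. Hence `f_T(S) ≤ P(T)` for every `S`.

Now let `S` be an optimal set of minimum size. For `v ∈ S` the set `S \ {v}` is not optimal, so
`f_T` drops when `v` is removed, which means that at least three edges of `E_T(S)` have `v` as
their only end in `S`. These private edges of distinct vertices are distinct, so
`3 |S| ≤ n - 1`.
-/

open Finset SimpleGraph

lemma SimpleGraph.pathGraph_degree_le_two {m : ℕ} (i : Fin m)
    [Fintype ((pathGraph m).neighborSet i)] : (pathGraph m).degree i ≤ 2 := by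
  classical
  obtain _ | _ | k := m
  · exact i.elim0
  · simp
  · calc (pathGraph (k + 2)).degree i ≤ (cycleGraph (k + 2)).degree i :=
          degree_le_of_le pathGraph_le_cycleGraph
      _ ≤ 2 := cycleGraph_degree_two_le ▸ card_le_two

lemma card_filter_adj_eq_degree_induce {V : Type*} {G : SimpleGraph V} [DecidableRel G.Adj]
    {s : Finset V} {v : V} (hv : v ∈ s) :
    #{w ∈ s | G.Adj v w} = (G.induce (s : Set V)).degree ⟨v, hv⟩ := by
  rw [← card_neighborSet_eq_degree, ← Fintype.card_coe]
  exact Fintype.card_congr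
    { toFun := fun w => ⟨⟨w, (mem_filter.1 w.2).1⟩, (mem_filter.1 w.2).2⟩
      invFun := fun w => ⟨w.1, mem_filter.2 ⟨w.1.2, w.2⟩⟩ }

section PathSets

variable {V : Type*} [Fintype V] [DecidableEq V] {G : SimpleGraph V} [DecidableRel G.Adj]

lemma isPathSet_singleton (G : SimpleGraph V) (v : V) : IsPathSet G {v} :=
  ⟨1, ⟨{ toEquiv := Fintype.equivFinOfCardEq (by simp)
         map_rel_iff' := fun {a b} => by
           obtain rfl : a = b := Subtype.ext (by grind [a.2, b.2])
           simp }⟩⟩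

lemma card_edgeSet_induce_le (s : Finset V) :
    Nat.card (G.induce (s : Set V)).edgeSet ≤ #(G.edgeFinset ∩ s.sym2) := by
  rw [← Nat.card_eq_finsetCard]
  refine Nat.card_le_card_of_injective
    (fun e => ⟨(Embedding.induce (s : Set V)).mapEdgeSet e, ?_⟩) fun e₁ e₂ h =>
      (Embedding.induce _).mapEdgeSet.injective (Subtype.ext (congrArg Subtype.val h :))
  obtain ⟨e, he⟩ := e
  induction e with
  | _ a b => simpa [Hom.mapEdgeSet, mem_sym2_iff] using he

lemma card_incidenceFinset_inter_sym2_le (v : V) (s : Finset V) :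
    #(G.incidenceFinset v ∩ s.sym2) ≤ #{w ∈ s | G.Adj v w} := by
  refine (card_le_card fun e he => ?_).trans (card_image_le (f := fun w => s(v, w)))
  obtain ⟨he, hes⟩ := mem_inter.1 he
  obtain ⟨hadj, hve⟩ := (G.mem_incidenceFinset v e).1 he
  obtain ⟨w, rfl⟩ := Sym2.mem_iff_exists.1 hve
  exact mem_image.2 ⟨w, mem_filter.2 ⟨(mk_mem_sym2_iff.1 hes).2, hadj⟩, rfl⟩

lemma IsPathSet.card_filter_adj_le_two {s : Finset V} (h : IsPathSet G s) {v : V} (hv : v ∈ s) :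
    #{w ∈ s | G.Adj v w} ≤ 2 := by
  classical
  obtain ⟨m, ⟨φ⟩⟩ := h
  rw [card_filter_adj_eq_degree_induce hv, ← φ.degree_eq]
  exact pathGraph_degree_le_two _

lemma IsPathSet.card_le_card_edges_add_one {s : Finset V} (h : IsPathSet G s) :
    #s ≤ #(G.edgeFinset ∩ s.sym2) + 1 := by
  obtain rfl | ⟨v, hv⟩ := s.eq_empty_or_nonempty
  · simp
  obtain ⟨m, ⟨φ⟩⟩ := h
  have : Nonempty (s : Set V) := ⟨⟨v, hv⟩⟩
  have hconn : (G.induce (s : Set V)).Connected :=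
    ⟨φ.preconnected_iff.2 (pathGraph_preconnected m)⟩
  calc #s = Nat.card (s : Set V) := by simp
    _ ≤ Nat.card (G.induce (s : Set V)).edgeSet + 1 := hconn.card_vert_le_card_edgeSet_add_one
    _ ≤ #(G.edgeFinset ∩ s.sym2) + 1 := by gcongr; exact card_edgeSet_induce_le s

end PathSets

section IncidentEdges

variable {V : Type*} [Fintype V] [DecidableEq V] {G : SimpleGraph V} [DecidableRel G.Adj]

def incidentEdgeFinset (G : SimpleGraph V) [DecidableRel G.Adj] (S : Finset V) :
    Finset (Sym2 V) :=
  S.biUnion fun v => G.incidenceFinset v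

lemma mem_incidentEdgeFinset {S : Finset V} {e : Sym2 V} :
    e ∈ incidentEdgeFinset G S ↔ e ∈ G.edgeSet ∧ ∃ v ∈ S, v ∈ e := by
  simp only [incidentEdgeFinset, mem_biUnion, mem_incidenceFinset, incidenceSet,
    Set.mem_ofPred_eq]
  tauto

lemma incidentEdgeFinset_mono {S S' : Finset V} (h : S ⊆ S') :
    incidentEdgeFinset G S ⊆ incidentEdgeFinset G S' :=
  biUnion_subset_biUnion_of_subset_left _ h

def privateEdgeFinset (G : SimpleGraph V) [DecidableRel G.Adj] (S : Finset V) (v : V) :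
    Finset (Sym2 V) :=
  incidentEdgeFinset G S \ incidentEdgeFinset G (S.erase v)

lemma card_privateEdgeFinset_add_card (S : Finset V) (v : V) :
    #(privateEdgeFinset G S v) + #(incidentEdgeFinset G (S.erase v)) =
      #(incidentEdgeFinset G S) :=
  card_sdiff_add_card_eq_card (incidentEdgeFinset_mono (erase_subset v S))

lemma eq_of_mem_privateEdgeFinset {S : Finset V} {v u : V} {e : Sym2 V}
    (he : e ∈ privateEdgeFinset G S v) (hu : u ∈ S) (hue : u ∈ e) : u = v := by
  obtain ⟨he, hne⟩ := mem_sdiff.1 he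
  by_contra huv
  exact hne (mem_incidentEdgeFinset.2
    ⟨(mem_incidentEdgeFinset.1 he).1, u, mem_erase.2 ⟨huv, hu⟩, hue⟩)

lemma sum_card_privateEdgeFinset_le (S : Finset V) :
    ∑ v ∈ S, #(privateEdgeFinset G S v) ≤ #G.edgeFinset := by
  have hdisj : (S : Set V).PairwiseDisjoint (privateEdgeFinset G S) := by
    intro v _ w _ hvw
    refine disjoint_left.2 fun e hev hew => hvw ?_
    obtain ⟨-, u, hu, hue⟩ := mem_incidentEdgeFinset.1 (mem_sdiff.1 hev).1
    exact (eq_of_mem_privateEdgeFinset hev hu hue).symm.trans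
      (eq_of_mem_privateEdgeFinset hew hu hue)
  rw [← card_biUnion hdisj]
  refine card_le_card (biUnion_subset.2 fun v _ e he => ?_)
  exact mem_edgeFinset.2 (mem_incidentEdgeFinset.1 (mem_sdiff.1 he).1).1

end IncidentEdges

section PathPartitions

variable {V : Type*} [Fintype V] [DecidableEq V] {G : SimpleGraph V}

def IsPathPartition (G : SimpleGraph V) (P : Finset (Finset V)) : Prop :=
  (∀ s ∈ P, IsPathSet G s) ∧ ∀ v : V, ∃! s, s ∈ P ∧ v ∈ s

lemma isPathPartition_singletons (G : SimpleGraph V) :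
    IsPathPartition G (univ.image fun v : V => ({v} : Finset V)) := by
  refine ⟨fun s hs => ?_, fun v => ⟨{v}, by simp, ?_⟩⟩
  · obtain ⟨v, -, rfl⟩ := mem_image.1 hs
    exact isPathSet_singleton G v
  · rintro s ⟨hs, hvs⟩
    obtain ⟨w, -, rfl⟩ := mem_image.1 hs
    rw [mem_singleton.1 hvs]

lemma exists_isPathPartition_card_eq_pathCoverNumber (G : SimpleGraph V) :
    ∃ P, IsPathPartition G P ∧ #P = pathCoverNumber G := by
  obtain ⟨P, hcard, hP⟩ :=
    Nat.sInf_mem (s := {p | ∃ P : Finset (Finset V), #P = p ∧ IsPathPartition G P})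
      ⟨_, _, rfl, isPathPartition_singletons G⟩
  exact ⟨P, hP, hcard⟩

namespace IsPathPartition

variable {P : Finset (Finset V)}

lemma eq_of_mem (hP : IsPathPartition G P) {s t : Finset V} {v : V} (hs : s ∈ P) (ht : t ∈ P)
    (hvs : v ∈ s) (hvt : v ∈ t) : s = t :=
  (hP.2 v).unique ⟨hs, hvs⟩ ⟨ht, hvt⟩

variable [DecidableRel G.Adj]

lemma card_le_card_internalEdges_add_card (hP : IsPathPartition G P) :
    Fintype.card V ≤ #(P.biUnion fun s => G.edgeFinset ∩ s.sym2) + #P := by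
  have hdisj : (P : Set (Finset V)).PairwiseDisjoint fun s => G.edgeFinset ∩ s.sym2 := by
    intro s hs t ht hst
    refine disjoint_left.2 fun e hes het => ?_
    induction e with
    | _ a b =>
      exact hst (hP.eq_of_mem hs ht (mk_mem_sym2_iff.1 (mem_inter.1 hes).2).1
        (mk_mem_sym2_iff.1 (mem_inter.1 het).2).1)
  calc Fintype.card V ≤ #(P.biUnion id) := card_le_card fun v _ => by
        obtain ⟨s, ⟨hs, hvs⟩, -⟩ := hP.2 v
        exact mem_biUnion.2 ⟨s, hs, hvs⟩
    _ ≤ ∑ s ∈ P, #s := card_biUnion_le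
    _ ≤ ∑ s ∈ P, (#(G.edgeFinset ∩ s.sym2) + 1) :=
        sum_le_sum fun s hs => (hP.1 s hs).card_le_card_edges_add_one
    _ = #(P.biUnion fun s => G.edgeFinset ∩ s.sym2) + #P := by
        rw [sum_add_distrib, card_biUnion hdisj, sum_const, smul_eq_mul, mul_one]

lemma card_incidentEdgeFinset_add_card_le (hP : IsPathPartition G P) (S : Finset V) :
    #(incidentEdgeFinset G S) + Fintype.card V ≤ 2 * #S + #P + #G.edgeFinset := by
  have hcover := hP.card_le_card_internalEdges_add_card
  set I := P.biUnion fun s => G.edgeFinset ∩ s.sym2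
  choose block hblock using hP.2
  have hsub : incidentEdgeFinset G S ⊆
      S.biUnion (fun v => G.incidenceFinset v ∩ (block v).sym2) ∪ (G.edgeFinset \ I) := by
    intro e he
    obtain ⟨hedge, v, hv, hve⟩ := mem_incidentEdgeFinset.1 he
    by_cases heI : e ∈ I
    · obtain ⟨s, hs, hes⟩ := mem_biUnion.1 heI
      have hvs : v ∈ s := mem_sym2_iff.1 (mem_inter.1 hes).2 v hve
      rw [hP.eq_of_mem hs (hblock v).1.1 hvs (hblock v).1.2] at hes
      refine mem_union_left _ (mem_biUnion.2 ⟨v, hv, mem_inter.2 ⟨?_, (mem_inter.1 hes).2⟩⟩)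
      exact (G.mem_incidenceFinset v e).2 ⟨hedge, hve⟩
    · exact mem_union_right _ (mem_sdiff.2 ⟨mem_edgeFinset.2 hedge, heI⟩)
  have hwithin : #(S.biUnion fun v => G.incidenceFinset v ∩ (block v).sym2) ≤ 2 * #S :=
    calc _ ≤ ∑ v ∈ S, #(G.incidenceFinset v ∩ (block v).sym2) := card_biUnion_le
      _ ≤ ∑ _v ∈ S, 2 := sum_le_sum fun v _ =>
          (card_incidenceFinset_inter_sym2_le v _).trans
            ((hP.1 _ (hblock v).1.1).card_filter_adj_le_two (hblock v).1.2)
      _ = 2 * #S := by rw [sum_const, smul_eq_mul, mul_comm]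
  have hbetween : #(G.edgeFinset \ I) + #I = #G.edgeFinset :=
    card_sdiff_add_card_eq_card (biUnion_subset.2 fun _ _ => inter_subset_left)
  have := (card_le_card hsub).trans (card_union_le _ _)
  omega

end IsPathPartition

end PathPartitions

section OptimalSets

variable {n : ℕ}

lemma fT_eq_card_incidentEdgeFinset (G : SimpleGraph (Fin n)) [DecidableRel G.Adj]
    (S : Finset (Fin n)) : fT G S = #(incidentEdgeFinset G S) - 2 * #S + 1 := by
  have : ETset G S = incidentEdgeFinset G S := by
    ext e
    simp [ETset, mem_incidentEdgeFinset]
  rw [fT, this, Set.ncard_coe_finset]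

lemma fT_le_pathCoverNumber {T : SimpleGraph (Fin n)} (hT : T.IsTree) (S : Finset (Fin n)) :
    fT T S ≤ pathCoverNumber T := by
  classical
  obtain ⟨P, hP, hcard⟩ := exists_isPathPartition_card_eq_pathCoverNumber T
  have := hP.card_incidentEdgeFinset_add_card_le S
  have := hT.card_edgeFinset
  rw [fT_eq_card_incidentEdgeFinset, ← hcard]
  simp only [Fintype.card_fin] at *
  omega

lemma fT_sub_fT_erase (G : SimpleGraph (Fin n)) [DecidableRel G.Adj] {S : Finset (Fin n)}
    {v : Fin n} (hv : v ∈ S) :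
    fT G S - fT G (S.erase v) = #(privateEdgeFinset G S v) - 2 := by
  have := card_privateEdgeFinset_add_card (G := G) S v
  rw [fT_eq_card_incidentEdgeFinset, fT_eq_card_incidentEdgeFinset, card_erase_of_mem hv,
    Nat.cast_sub (card_pos.2 ⟨v, hv⟩)]
  omega

lemma three_mul_card_le_of_forall_fT_erase_lt (G : SimpleGraph (Fin n)) [DecidableRel G.Adj]
    {S : Finset (Fin n)} (h : ∀ v ∈ S, fT G (S.erase v) < fT G S) :
    3 * #S ≤ #G.edgeFinset :=
  calc 3 * #S = ∑ _v ∈ S, 3 := by rw [sum_const, smul_eq_mul, mul_comm]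
    _ ≤ ∑ v ∈ S, #(privateEdgeFinset G S v) := sum_le_sum fun v hv => by
        have := fT_sub_fT_erase G hv
        have := h v hv
        omega
    _ ≤ #G.edgeFinset := sum_card_privateEdgeFinset_le S

lemma cT_le_card {T : SimpleGraph (Fin n)} {S : Finset (Fin n)}
    (h : fT T S = pathCoverNumber T) : cT T ≤ #S :=
  Nat.sInf_le ⟨S, rfl, h⟩

lemma exists_card_eq_cT {T : SimpleGraph (Fin n)} (h : cT T ≠ 0) :
    ∃ S : Finset (Fin n), #S = cT T ∧ fT T S = pathCoverNumber T :=
  Nat.sInf_mem (Nat.nonempty_of_pos_sInf (Nat.pos_of_ne_zero h))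

end OptimalSets

theorem stmt15_general {n : ℕ} (T : SimpleGraph (Fin n)) (hT : T.IsTree) :
    3 * cT T ≤ n - 1 := by
  classical
  obtain h0 | h0 := eq_or_ne (cT T) 0
  · simp [h0]
  obtain ⟨S, hcard, hopt⟩ := exists_card_eq_cT h0
  have hessential : ∀ v ∈ S, fT T (S.erase v) < fT T S := fun v hv =>
    hopt ▸ (fT_le_pathCoverNumber hT _).lt_of_ne fun h => by
      have := cT_le_card h
      rw [card_erase_of_mem hv] at this
      omega
  have := three_mul_card_le_of_forall_fT_erase_lt T hessential
  have := hT.card_edgeFinset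
  simp only [Fintype.card_fin] at *
  omega

/-- For a tree on n ≥ 3 vertices, c(T) ≤ (n−1)/3. -/
theorem stmt15 {n : ℕ} (T : SimpleGraph (Fin n)) (hT : T.IsTree) (hn : 3 ≤ n) :
    3 * cT T ≤ n - 1 :=
  stmt15_general T hT
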